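/- Assume S(x) = x²/2 + O(x^{2-δ}) for some 0 < δ < 2, and let F(z) = Σ_{n=1}^∞ Λ(n) zⁿ. Then there is a constant C > 0 such that for every integer N ≥ 2 and every complex z with |z| = 1 - 1/N, |F(z)² - 1/(1-z)²| ≤ C · |1-z| · N^{3-δ}. -/

import Mathlib

/-!
Cauchy multiplication gives `F(z)² = ∑ G(n) zⁿ = (1 - z) ∑ S(n) zⁿ`, while
`1 / (1 - z)² = (1 - z) ∑ (n + 2).choose 2 · zⁿ`. Hence `F(z)² - 1 / (1 - z)² = (1 - z) ∑ D(n) zⁿ`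
with `D(n) = S(n) - (n + 2).choose 2 = S(n) - n²/2 + O(n)`, which is `O((n + 1)^(2 - δ))` when
`δ ≤ 1`; and `∑ (n + 1)^α rⁿ = O((1 - r)^(-(α + 1)))`, which is `O(N^(α + 1))` for `r = 1 - 1/N`.
When `δ > 1` the hypothesis cannot hold: it would give `G(n) = S(n) - S(n - 1) = n + o(n)`,
whereas for odd `n` one of `k₁, k₂` in `k₁ + k₂ = n` is even, hence a power of `2`, so that
`G(n) ≤ 2 log² n`.
-/

open Filter
open scoped ArithmeticFunction

/-- The Goldbach generating function `G(n) = ∑_{k₁+k₂=n} Λ(k₁)Λ(k₂)`. -/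
noncomputable def goldbachG (n : ℕ) : ℝ :=
  ∑ p ∈ Finset.HasAntidiagonal.antidiagonal n, Λ p.1 * Λ p.2

/-- The summatory Goldbach function `S(N) = ∑_{n ≤ N} G(n)`. -/
noncomputable def goldbachS (N : ℕ) : ℝ :=
  ∑ n ∈ Finset.range (N + 1), goldbachG n

open Finset
open scoped Nat
open ArithmeticFunction
  (vonMangoldt_nonneg vonMangoldt_le_log vonMangoldt_ne_zero_iff vonMangoldt_sum)

lemma vonMangoldt_le_log_of_le {k n : ℕ} (hkn : k ≤ n) (hn : 1 ≤ n) : Λ k ≤ Real.log n := by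
  rcases k.eq_zero_or_pos with rfl | hk
  · simpa using Real.log_nonneg (by exact_mod_cast hn)
  · exact vonMangoldt_le_log.trans
      (Real.log_le_log (by exact_mod_cast hk) (by exact_mod_cast hkn))

lemma summable_norm_vonMangoldt_mul_pow {z : ℂ} (hz : ‖z‖ < 1) :
    Summable fun n => ‖(Λ n : ℂ) * z ^ n‖ := by
  have hz' : ‖‖z‖‖ < 1 := by rwa [norm_norm]
  refine (summable_pow_mul_geometric_of_norm_lt_one 1 hz').of_nonneg_of_le
    (fun n => norm_nonneg _) fun n => ?_
  rw [norm_mul, norm_pow, Complex.norm_real, Real.norm_of_nonneg vonMangoldt_nonneg, pow_one]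
  gcongr
  exact vonMangoldt_le_log.trans (Real.log_le_self (Nat.cast_nonneg n))

lemma goldbachG_mul_pow_eq (z : ℂ) (n : ℕ) :
    (goldbachG n : ℂ) * z ^ n =
      ∑ kl ∈ antidiagonal n, ((Λ kl.1 : ℂ) * z ^ kl.1) * ((Λ kl.2 : ℂ) * z ^ kl.2) := by
  rw [goldbachG, Complex.ofReal_sum, sum_mul]
  refine sum_congr rfl fun kl hkl => ?_
  rw [← mem_antidiagonal.1 hkl, pow_add]
  push_cast
  ring

lemma summable_norm_goldbachG_mul_pow {z : ℂ} (hz : ‖z‖ < 1) :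
    Summable fun n => ‖(goldbachG n : ℂ) * z ^ n‖ := by
  simp only [goldbachG_mul_pow_eq]
  exact summable_norm_sum_mul_antidiagonal_of_summable_norm (f := fun k => (Λ k : ℂ) * z ^ k)
    (g := fun k => (Λ k : ℂ) * z ^ k)
    (summable_norm_vonMangoldt_mul_pow hz) (summable_norm_vonMangoldt_mul_pow hz)

lemma hasSum_goldbachG_mul_pow {z : ℂ} (hz : ‖z‖ < 1) :
    HasSum (fun n => (goldbachG n : ℂ) * z ^ n) ((∑' n, (Λ n : ℂ) * z ^ n) ^ 2) := by
  rw [sq, tsum_mul_tsum_eq_tsum_sum_antidiagonal_of_summable_norm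
    (summable_norm_vonMangoldt_mul_pow hz) (summable_norm_vonMangoldt_mul_pow hz)]
  simp only [← goldbachG_mul_pow_eq]
  exact (summable_norm_goldbachG_mul_pow hz).of_norm.hasSum

theorem hasSum_sum_range_mul_pow {𝕜 : Type*} [NormedField 𝕜] [CompleteSpace 𝕜] {a : ℕ → 𝕜}
    {z s : 𝕜} (hz : ‖z‖ < 1) (ha : Summable fun n => ‖a n * z ^ n‖)
    (hs : HasSum (fun n => a n * z ^ n) s) :
    HasSum (fun n => (∑ k ∈ range (n + 1), a k) * z ^ n) (s / (1 - z)) := by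
  have h := hasSum_sum_range_mul_of_summable_norm ha (summable_norm_geometric_of_norm_lt_one hz)
  rw [hs.tsum_eq, tsum_geometric_of_norm_lt_one hz, ← div_eq_mul_inv] at h
  refine h.congr_fun fun n => ?_
  rw [sum_mul]
  refine sum_congr rfl fun k hk => ?_
  rw [mul_assoc, ← pow_add, Nat.add_sub_cancel' (Nat.lt_succ_iff.1 (mem_range.1 hk))]

noncomputable def goldbachDefect (n : ℕ) : ℝ :=
  goldbachS n - (n + 2).choose 2

lemma sq_tsum_vonMangoldt_mul_pow_sub {z : ℂ} (hz : ‖z‖ < 1) :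
    (∑' n, (Λ n : ℂ) * z ^ n) ^ 2 - 1 / (1 - z) ^ 2 =
      (1 - z) * ∑' n, (goldbachDefect n : ℂ) * z ^ n := by
  have hD := (hasSum_sum_range_mul_pow hz (summable_norm_goldbachG_mul_pow hz)
    (hasSum_goldbachG_mul_pow hz)).sub (hasSum_choose_mul_geometric_of_norm_lt_one 2 hz)
  have hz1 : 1 - z ≠ 0 := sub_ne_zero.2 fun h => by simp [← h] at hz
  have hD' : HasSum (fun n => (goldbachDefect n : ℂ) * z ^ n)
      ((∑' n, (Λ n : ℂ) * z ^ n) ^ 2 / (1 - z) - 1 / (1 - z) ^ (2 + 1)) :=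
    hD.congr_fun fun n => by simp [goldbachDefect, goldbachS, sub_mul]
  rw [hD'.tsum_eq]
  field_simp
  ring

lemma rpow_le_rpow_add_rpow_mul_pow {x M α : ℝ} {m : ℕ} (hx : 0 ≤ x) (hM : 0 < M) (hα : 0 ≤ α)
    (hαm : α ≤ m) : x ^ α ≤ M ^ α + M ^ (α - m) * x ^ m := by
  rcases le_or_gt x M with hxM | hMx
  · have := Real.rpow_le_rpow hx hxM hα
    have : 0 ≤ M ^ (α - m) * x ^ m := by positivity
    linarith
  · have hx0 : 0 < x := hM.trans hMx
    calc x ^ α = x ^ (α - m) * x ^ m := by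
          rw [← Real.rpow_natCast, ← Real.rpow_add hx0, sub_add_cancel]
      _ ≤ M ^ (α - m) * x ^ m :=
          mul_le_mul_of_nonneg_right (Real.rpow_le_rpow_of_nonpos hM hMx.le (by linarith))
            (by positivity)
      _ ≤ M ^ α + M ^ (α - m) * x ^ m := le_add_of_nonneg_left (by positivity)

lemma add_one_pow_le_factorial_mul_choose (n m : ℕ) :
    ((n : ℝ) + 1) ^ m ≤ m ! * (n + m).choose m := by
  have h := Nat.pow_le_choose (α := ℝ) m (n + m)
  rw [div_le_iff₀ (by positivity), show n + m + 1 - m = n + 1 by omega] at h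
  push_cast at h
  linarith

/-- With `M = (1 - ‖z‖)⁻¹`, the weights `(n + 1) ^ α` are split at `n ≈ M`: below it they are at
most `M ^ α`, above it they are dominated by `M ^ (α - m) m! (n + m).choose m`, whose generating
function is `M ^ (α - m) m! M ^ (m + 1)`. -/
theorem norm_tsum_mul_pow_le {𝕜 : Type*} [NormedField 𝕜] {a : ℕ → 𝕜} {K α : ℝ} {m : ℕ}
    (hα : 0 ≤ α) (hαm : α ≤ m) (ha : ∀ n, ‖a n‖ ≤ K * ((n : ℝ) + 1) ^ α) {z : 𝕜} (hz : ‖z‖ < 1) :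
    ‖∑' n, a n * z ^ n‖ ≤ K * (1 + m !) * (1 - ‖z‖)⁻¹ ^ (α + 1) := by
  set r := ‖z‖
  set M := (1 - r)⁻¹ with hM_def
  have hM : 0 < M := inv_pos.2 (sub_pos.2 hz)
  have hK : 0 ≤ K := by simpa using (norm_nonneg _).trans (ha 0)
  have hgeom : HasSum (fun n => r ^ n) M := hasSum_geometric_of_lt_one (norm_nonneg z) hz
  have hchoose : HasSum (fun n => ((n + m).choose m : ℝ) * r ^ n) (M ^ (m + 1)) := by
    simpa [hM_def, inv_pow] using
      hasSum_choose_mul_geometric_of_norm_lt_one m (r := r) (by rwa [norm_norm])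
  have hsum := ((hgeom.mul_left (M ^ α)).add
    ((hchoose.mul_left (m ! : ℝ)).mul_left (M ^ (α - m)))).mul_left K
  convert tsum_of_norm_bounded hsum fun n => ?_ using 1
  · have hpow : M ^ (α - m) * M ^ (m + 1) = M ^ (α + 1) := by
      rw [← Real.rpow_natCast, ← Real.rpow_add hM]
      push_cast
      ring_nf
    linear_combination (-K) * (Real.rpow_add_one hM.ne' α).symm + (-K * m !) * hpow
  · have hw := rpow_le_rpow_add_rpow_mul_pow (x := (n : ℝ) + 1) (by positivity) hM hα hαm
    have hc := add_one_pow_le_factorial_mul_choose n m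
    rw [norm_mul, norm_pow]
    calc ‖a n‖ * r ^ n ≤ K * ((n : ℝ) + 1) ^ α * r ^ n := by gcongr; exact ha n
      _ ≤ K * (M ^ α + M ^ (α - m) * (m ! * (n + m).choose m)) * r ^ n := by
          gcongr
          exact hw.trans (by gcongr)
      _ = _ := by ring

lemma exists_abs_goldbachDefect_le {δ : ℝ} (hδ : δ ≤ 1)
    (hS : (fun N : ℕ => goldbachS N - (N : ℝ) ^ 2 / 2) =O[atTop]
      fun N : ℕ => (N : ℝ) ^ (2 - δ)) :
    ∃ K, ∀ n, |goldbachDefect n| ≤ K * ((n : ℝ) + 1) ^ (2 - δ) := by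
  have hlin :
      (fun n : ℕ => (3 * (n : ℝ) + 2) / 2) =O[atTop] fun n : ℕ => ((n : ℝ) + 1) ^ (2 - δ) :=
    Asymptotics.IsBigO.of_bound 2 <| Eventually.of_forall fun n => by
      rw [Real.norm_of_nonneg (by positivity), Real.norm_of_nonneg (by positivity)]
      have := Real.self_le_rpow_of_one_le (by simp : (1 : ℝ) ≤ n + 1) (by linarith : 1 ≤ 2 - δ)
      linarith
  have hpow : (fun n : ℕ => (n : ℝ) ^ (2 - δ)) =O[atTop] fun n : ℕ => ((n : ℝ) + 1) ^ (2 - δ) :=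
    Asymptotics.IsBigO.of_bound 1 <| Eventually.of_forall fun n => by
      rw [Real.norm_of_nonneg (by positivity), Real.norm_of_nonneg (by positivity), one_mul]
      exact Real.rpow_le_rpow (by positivity) (by linarith) (by linarith)
  have hD : goldbachDefect =O[atTop] fun n : ℕ => ((n : ℝ) + 1) ^ (2 - δ) := by
    refine ((hS.trans hpow).sub hlin).congr_left fun n => ?_
    rw [goldbachDefect, Nat.cast_choose_two]
    push_cast
    ring
  rw [← Nat.cofinite_eq_atTop, Asymptotics.isBigO_cofinite_iff fun n h =>
    absurd h (Real.rpow_pos_of_pos n.cast_add_one_pos _).ne'] at hD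
  obtain ⟨K, hK⟩ := hD
  refine ⟨K, fun n => ?_⟩
  rw [← Real.norm_eq_abs, ← Real.norm_of_nonneg (by positivity : (0 : ℝ) ≤ ((n : ℝ) + 1) ^ (2 - δ))]
  exact hK n

lemma sum_vonMangoldt_even_le_log (n : ℕ) :
    ∑ a ∈ range (n + 1) with Even a, Λ a ≤ Real.log n := by
  rcases n.eq_zero_or_pos with rfl | hn
  · simp [sum_filter]
  set L := Nat.log 2 n
  calc ∑ a ∈ range (n + 1) with Even a, Λ a
      ≤ ∑ d ∈ (2 ^ L).divisors, Λ d := by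
        rw [← sum_filter_ne_zero]
        refine sum_le_sum_of_subset_of_nonneg (fun a ha => ?_)
          fun _ _ _ => vonMangoldt_nonneg
        simp only [mem_filter, mem_range] at ha
        obtain ⟨⟨han, ha2⟩, hΛ⟩ := ha
        obtain ⟨p, k, hp, -, rfl⟩ := vonMangoldt_ne_zero_iff.1 hΛ
        obtain rfl : p = 2 := ((Nat.prime_dvd_prime_iff_eq Nat.prime_two hp.nat_prime).1
          (Nat.prime_two.dvd_of_dvd_pow (even_iff_two_dvd.1 ha2))).symm
        exact Nat.mem_divisors.2 ⟨pow_dvd_pow 2 (Nat.le_log_of_pow_le one_lt_two (by omega)),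
          by positivity⟩
    _ = Real.log (2 ^ L : ℕ) := vonMangoldt_sum
    _ ≤ Real.log n :=
        Real.log_le_log (by positivity) (by exact_mod_cast Nat.pow_log_le_self 2 hn.ne')

lemma goldbachG_le_of_odd {n : ℕ} (hn : Odd n) : goldbachG n ≤ 2 * Real.log n ^ 2 := by
  set e : ℕ → ℝ := fun a => if Even a then Λ a else 0
  have hn1 : 1 ≤ n := hn.pos
  have hterm : ∀ p ∈ antidiagonal n, Λ p.1 * Λ p.2 ≤ Real.log n * e p.1 + Real.log n * e p.2 := by
    intro p hp
    have hp' := mem_antidiagonal.1 hp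
    have h1 := vonMangoldt_le_log_of_le (k := p.1) (by omega) hn1
    have h2 := vonMangoldt_le_log_of_le (k := p.2) (by omega) hn1
    have h1' := vonMangoldt_nonneg (n := p.1)
    have h2' := vonMangoldt_nonneg (n := p.2)
    have hlog := Real.log_nonneg (by exact_mod_cast hn1 : (1 : ℝ) ≤ n)
    rw [← hp', Nat.odd_add] at hn
    by_cases he : Even p.1
    · have : 0 ≤ e p.2 := by unfold e; split_ifs <;> simp [h2']
      simp only [e, if_pos he]
      nlinarith
    · have : Even p.2 := hn.1 (Nat.not_even_iff_odd.1 he)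
      simp only [e, if_neg he, if_pos this]
      nlinarith
  have he : ∑ a ∈ range (n + 1), e a ≤ Real.log n := by
    simpa only [e, sum_ite, sum_const_zero, add_zero] using sum_vonMangoldt_even_le_log n
  calc goldbachG n ≤ ∑ p ∈ antidiagonal n, (Real.log n * e p.1 + Real.log n * e p.2) :=
        sum_le_sum hterm
    _ = 2 * Real.log n * ∑ a ∈ range (n + 1), e a := by
        have hswap : ∑ p ∈ antidiagonal n, e p.2 = ∑ p ∈ antidiagonal n, e p.1 :=
          Nat.sum_antidiagonal_swap (f := fun p => e p.1)
        rw [sum_add_distrib, ← mul_sum, ← mul_sum, hswap,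
          Nat.sum_antidiagonal_eq_sum_range_succ_mk]
        ring
    _ ≤ 2 * Real.log n * Real.log n := by gcongr
    _ = 2 * Real.log n ^ 2 := by ring

lemma isLittleO_rpow_id_atTop {s : ℝ} (hs : s < 1) : (fun x : ℝ => x ^ s) =o[atTop] fun x => x := by
  rw [Asymptotics.isLittleO_iff_tendsto'
    ((eventually_gt_atTop 0).mono fun x hx h => absurd h hx.ne')]
  refine (tendsto_rpow_neg_atTop (sub_pos.2 hs)).congr' ?_
  filter_upwards [eventually_gt_atTop 0] with x hx
  rw [neg_sub, ← Real.rpow_sub_one hx.ne']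

lemma goldbachS_succ (n : ℕ) : goldbachS (n + 1) = goldbachS n + goldbachG (n + 1) :=
  sum_range_succ _ _

theorem not_isBigO_goldbachS_sub_sq {δ : ℝ} (hδ : 1 < δ) :
    ¬ (fun N : ℕ => goldbachS N - (N : ℝ) ^ 2 / 2) =O[atTop] fun N : ℕ => (N : ℝ) ^ (2 - δ) := by
  intro hS
  have hS' := hS.trans_isLittleO
    ((isLittleO_rpow_id_atTop (by linarith)).comp_tendsto tendsto_natCast_atTop_atTop)
  have hG := (Real.isLittleO_pow_log_id_atTop (n := 2)).const_mul_left 2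
    |>.comp_tendsto tendsto_natCast_atTop_atTop
  obtain ⟨k, hk⟩ := eventually_atTop.1
    ((hS'.bound (by norm_num : (0 : ℝ) < 1 / 8)).and (hG.bound (by norm_num : (0 : ℝ) < 1 / 8)))
  obtain ⟨h1, -⟩ := hk (2 * k) (by omega)
  obtain ⟨h2, h3⟩ := hk (2 * k + 1) (by omega)
  have hodd := goldbachG_le_of_odd (odd_two_mul_add_one k)
  simp only [Function.comp_apply, id, Real.norm_eq_abs, Nat.abs_cast] at h1 h2 h3
  rw [goldbachS_succ] at h2
  push_cast at h1 h2 h3 hodd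
  have := le_abs_self (2 * Real.log (2 * k + 1) ^ 2)
  have := abs_le.1 h1
  have := abs_le.1 h2
  have : (2 * (k : ℝ) + 1) ^ 2 / 2 - (2 * k) ^ 2 / 2 = 2 * k + 1 / 2 := by ring
  linarith

theorem goldbach_F_squared_approx_general (δ : ℝ)
    (hS : (fun N : ℕ => goldbachS N - (N : ℝ) ^ 2 / 2) =O[atTop]
      fun N : ℕ => (N : ℝ) ^ (2 - δ)) :
    ∃ C : ℝ, 0 < C ∧ ∀ N : ℕ, 2 ≤ N → ∀ z : ℂ, ‖z‖ = 1 - 1 / (N : ℝ) →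
      ‖(∑' n : ℕ, (Λ n : ℂ) * z ^ n) ^ 2 - 1 / (1 - z) ^ 2‖ ≤
        C * ‖1 - z‖ * (N : ℝ) ^ (3 - δ) := by
  rcases le_or_gt δ 1 with hδ | hδ
  · obtain ⟨K, hK⟩ := exists_abs_goldbachDefect_le hδ hS
    set m := ⌈2 - δ⌉₊
    refine ⟨max K 1 * (1 + m !), by positivity, fun N hN z hz => ?_⟩
    have hN : (0 : ℝ) < N := by positivity
    have hz1 : ‖z‖ < 1 := by rw [hz]; linarith [one_div_pos.2 hN]
    have hzN : (1 - ‖z‖)⁻¹ = N := by rw [hz, sub_sub_cancel, one_div, inv_inv]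
    have hK' (n : ℕ) : ‖(goldbachDefect n : ℂ)‖ ≤ max K 1 * ((n : ℝ) + 1) ^ (2 - δ) := by
      rw [Complex.norm_real, Real.norm_eq_abs]
      exact (hK n).trans (by gcongr; exact le_max_left K 1)
    have hbound := norm_tsum_mul_pow_le (by linarith) (Nat.le_ceil (2 - δ)) hK' hz1
    rw [hzN, show 2 - δ + 1 = 3 - δ by ring] at hbound
    rw [sq_tsum_vonMangoldt_mul_pow_sub hz1, norm_mul]
    calc ‖1 - z‖ * ‖∑' n, (goldbachDefect n : ℂ) * z ^ n‖
        ≤ ‖1 - z‖ * (max K 1 * (1 + m !) * (N : ℝ) ^ (3 - δ)) := by gcongr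
      _ = max K 1 * (1 + m !) * ‖1 - z‖ * (N : ℝ) ^ (3 - δ) := by ring
  · exact absurd hS (not_isBigO_goldbachS_sub_sq hδ)

/-- If `S(x) = x²/2 + O(x^{2-δ})` with `0 < δ < 2`, then, with
`F(z) = ∑_{n≥1} Λ(n) zⁿ`, there is `C > 0` such that for every integer `N ≥ 2`
and every `z` with `|z| = 1 - 1/N`, `|F(z)² - 1/(1-z)²| ≤ C |1-z| N^{3-δ}`. -/
theorem goldbach_F_squared_approx (δ : ℝ) (hδ0 : 0 < δ) (hδ2 : δ < 2)
    (hS : (fun N : ℕ => goldbachS N - (N : ℝ) ^ 2 / 2) =O[atTop]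
      fun N : ℕ => (N : ℝ) ^ (2 - δ)) :
    ∃ C : ℝ, 0 < C ∧ ∀ N : ℕ, 2 ≤ N → ∀ z : ℂ, ‖z‖ = 1 - 1 / (N : ℝ) →
      ‖(∑' n : ℕ, (Λ n : ℂ) * z ^ n) ^ 2 - 1 / (1 - z) ^ 2‖ ≤
        C * ‖1 - z‖ * (N : ℝ) ^ (3 - δ) :=
  goldbach_F_squared_approx_general δ hS
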